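/- Let σ : N → M be a smooth section of Π. (1) If σ is co-isotropic, then σ is a solution of the Π-HJE for (M, X_H) if and only if d(H∘σ) = i_{X_H^σ} σ*ω, i.e. d(H∘σ)_n(y) = ω_{σ(n)}(σ_{*,n}(X_H^σ(n)), σ_{*,n}(y)) for all n ∈ N, y ∈ T_nN, where X_H^σ(n) := Π_{*,σ(n)}(X_H(σ(n))). (2) If σ is Lagrangian, then σ is a solution of the Π-HJE for (M, X_H) if and only if d(H∘σ) = 0. -/

import Mathlib

open Manifold

/-! Pointwise this is linear algebra. Write `S = σ_{*,n}` and `P = Π_{*,σ(n)}`, so that `P ∘ S = id`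
and, by the chain rule, `d(H∘σ)_n(y) = ω(X_H, S y)`. Then `X_H - S (P X_H)` is `ω`-orthogonal to
`Im S` exactly when the right-hand side of (1) holds; co-isotropy puts it in `Im S`, and applying
`P` shows it vanishes. For a Lagrangian section `Im S` is also isotropic, so the right-hand side of
(1) is zero. -/

namespace LinearMap

variable {R V W K : Type*} [CommRing R] [AddCommGroup V] [Module R V] [AddCommGroup W]
  [Module R W] [AddCommGroup K] [Module R K] {ω : V →ₗ[R] V →ₗ[R] K} {S : W →ₗ[R] V}
  {P : V →ₗ[R] W}

theorem apply_apply_eq_self_iff_of_orthogonalBilin_range_le (hω : ω.IsAlt)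
    (hPS : ∀ y, P (S y) = y) (hco : (range S).orthogonalBilin ω ≤ range S) (x : V) :
    S (P x) = x ↔ ∀ y, ω x (S y) = ω (S (P x)) (S y) := by
  refine ⟨fun h y => by rw [h], fun h => ?_⟩
  have hmem : x - S (P x) ∈ (range S).orthogonalBilin ω := by
    rintro _ ⟨y, rfl⟩
    rw [← hω.neg, map_sub, sub_apply, h y, sub_self, neg_zero]
  obtain ⟨z, hz⟩ := hco hmem
  have hz0 : z = 0 := by simpa [hPS] using congrArg P hz
  rw [hz0, map_zero, eq_comm, sub_eq_zero] at hz
  exact hz.symm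

theorem apply_apply_eq_self_iff_of_orthogonalBilin_range_eq (hω : ω.IsAlt)
    (hPS : ∀ y, P (S y) = y) (hlag : (range S).orthogonalBilin ω = range S) (x : V) :
    S (P x) = x ↔ ∀ y, ω x (S y) = 0 := by
  refine (apply_apply_eq_self_iff_of_orthogonalBilin_range_le hω hPS hlag.le x).trans ?_
  refine forall_congr' fun y => ?_
  have hiso : ω (S (P x)) (S y) = 0 := hlag.ge ⟨y, rfl⟩ _ ⟨P x, rfl⟩
  rw [hiso]

end LinearMap

theorem mfderiv_apply_mfderiv_of_leftInverse {𝕜 EM HM M EN HN N : Type*}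
    [NontriviallyNormedField 𝕜]
    [NormedAddCommGroup EM] [NormedSpace 𝕜 EM] [TopologicalSpace HM]
    [TopologicalSpace M] [ChartedSpace HM M]
    [NormedAddCommGroup EN] [NormedSpace 𝕜 EN] [TopologicalSpace HN]
    [TopologicalSpace N] [ChartedSpace HN N]
    {IM : ModelWithCorners 𝕜 EM HM} {IN : ModelWithCorners 𝕜 EN HN}
    {π : M → N} {σ : N → M} (hsec : ∀ n, π (σ n) = n) {n : N}
    (hπ : MDifferentiableAt IM IN π (σ n)) (hσ : MDifferentiableAt IN IM σ n)
    (y : TangentSpace IN n) :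
    mfderiv IM IN π (σ n) (mfderiv IN IM σ n y) = y := by
  rw [← mfderiv_comp_apply n hπ hσ, show π ∘ σ = id from funext hsec, mfderiv_id]
  rfl

theorem hje_solution_iff_of_coisotropic_or_lagrangian_section_general
    {EM HM M EN HN N : Type*}
    [NormedAddCommGroup EM] [NormedSpace ℝ EM] [TopologicalSpace HM]
    [TopologicalSpace M] [ChartedSpace HM M]
    [NormedAddCommGroup EN] [NormedSpace ℝ EN] [TopologicalSpace HN]
    [TopologicalSpace N] [ChartedSpace HN N]
    {IM : ModelWithCorners ℝ EM HM} {IN : ModelWithCorners ℝ EN HN}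
    -- the fibration
    (π : M → N) (hπ : ContMDiff IM IN (⊤ : ℕ∞) π)
    -- the pointwise nondegenerate alternating bilinear form ω
    (ω : ∀ m : M, TangentSpace IM m →ₗ[ℝ] TangentSpace IM m →ₗ[ℝ] ℝ)
    (hωalt : ∀ (m : M) (v : TangentSpace IM m), ω m v v = 0)
    -- the Hamiltonian and its (smooth) Hamiltonian vector field
    (H : M → ℝ) (hH : ContMDiff IM 𝓘(ℝ, ℝ) (⊤ : ℕ∞) H)
    (XH : ∀ m : M, TangentSpace IM m)
    (hXH : ∀ (m : M) (v : TangentSpace IM m), ω m (XH m) v = mfderiv IM 𝓘(ℝ, ℝ) H m v)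
    -- the section σ of π
    (σ : N → M) (hσ : ContMDiff IN IM (⊤ : ℕ∞) σ) (hsec : ∀ n, π (σ n) = n) :
    -- (1) σ co-isotropic: (Im σ_{*,n})^ω ⊆ Im σ_{*,n}
    ((∀ n : N,
        {u : TangentSpace IM (σ n) | ∀ v ∈ Set.range (mfderiv IN IM σ n), ω (σ n) v u = 0} ⊆
          Set.range (mfderiv IN IM σ n)) →
      ((∀ n, mfderiv IN IM σ n (mfderiv IM IN π (σ n) (XH (σ n))) = XH (σ n)) ↔
        (∀ (n : N) (y : TangentSpace IN n),
          mfderiv IN 𝓘(ℝ, ℝ) (H ∘ σ) n y =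
            ω (σ n) (mfderiv IN IM σ n (mfderiv IM IN π (σ n) (XH (σ n))))
              (mfderiv IN IM σ n y)))) ∧
    -- (2) σ Lagrangian: Im σ_{*,n} = (Im σ_{*,n})^ω
    ((∀ n : N,
        Set.range (mfderiv IN IM σ n) =
          {u : TangentSpace IM (σ n) | ∀ v ∈ Set.range (mfderiv IN IM σ n), ω (σ n) v u = 0}) →
      ((∀ n, mfderiv IN IM σ n (mfderiv IM IN π (σ n) (XH (σ n))) = XH (σ n)) ↔
        (∀ n : N, mfderiv IN 𝓘(ℝ, ℝ) (H ∘ σ) n = 0))) := by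
  have hσd : ∀ n, MDifferentiableAt IN IM σ n := fun n => hσ.mdifferentiableAt (by simp)
  have hPS : ∀ n y, mfderiv IM IN π (σ n) (mfderiv IN IM σ n y) = y := fun n =>
    mfderiv_apply_mfderiv_of_leftInverse hsec (hπ.mdifferentiableAt (by simp)) (hσd n)
  have hchain : ∀ n y,
      mfderiv IN 𝓘(ℝ, ℝ) (H ∘ σ) n y = ω (σ n) (XH (σ n)) (mfderiv IN IM σ n y) :=
    fun n y => by rw [mfderiv_comp_apply n (hH.mdifferentiableAt (by simp)) (hσd n), hXH]
  refine ⟨fun hco => ?_, fun hlag => ?_⟩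
  · simp only [hchain]
    exact forall_congr' fun n =>
      LinearMap.apply_apply_eq_self_iff_of_orthogonalBilin_range_le (hωalt (σ n)) (hPS n)
        (hco n) _
  · simp only [ContinuousLinearMap.ext_iff, zero_apply, hchain]
    exact forall_congr' fun n =>
      LinearMap.apply_apply_eq_self_iff_of_orthogonalBilin_range_eq (hωalt (σ n)) (hPS n)
        (SetLike.coe_injective (hlag n).symm) _

/-- (1) If the section `σ` is co-isotropic, then `σ` solves the `π`-Hamilton–Jacobi equation
for `(M, X_H)` iff `d(H∘σ) = i_{X_H^σ} σ*ω`.  (2) If `σ` is Lagrangian, then `σ` solves the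
`π`-Hamilton–Jacobi equation for `(M, X_H)` iff `d(H∘σ) = 0`. -/
theorem hje_solution_iff_of_coisotropic_or_lagrangian_section
    {EM HM M EN HN N : Type*}
    [NormedAddCommGroup EM] [NormedSpace ℝ EM] [TopologicalSpace HM]
    [TopologicalSpace M] [ChartedSpace HM M]
    [NormedAddCommGroup EN] [NormedSpace ℝ EN] [TopologicalSpace HN]
    [TopologicalSpace N] [ChartedSpace HN N]
    {IM : ModelWithCorners ℝ EM HM} {IN : ModelWithCorners ℝ EN HN}
    [IsManifold IM (⊤ : ℕ∞) M] [IsManifold IN (⊤ : ℕ∞) N]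
    [FiniteDimensional ℝ EM] [FiniteDimensional ℝ EN]
    [IM.Boundaryless] [IN.Boundaryless]
    -- the fibration
    (π : M → N) (hπ : ContMDiff IM IN (⊤ : ℕ∞) π)
    (hπsurj : Function.Surjective π)
    (hπsub : ∀ m, Function.Surjective (mfderiv IM IN π m))
    -- the pointwise nondegenerate alternating bilinear form ω
    (ω : ∀ m : M, TangentSpace IM m →ₗ[ℝ] TangentSpace IM m →ₗ[ℝ] ℝ)
    (hωalt : ∀ (m : M) (v : TangentSpace IM m), ω m v v = 0)
    (hωnd : ∀ (m : M) (v : TangentSpace IM m), (∀ w, ω m v w = 0) → v = 0)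
    -- the Hamiltonian and its (smooth) Hamiltonian vector field
    (H : M → ℝ) (hH : ContMDiff IM 𝓘(ℝ, ℝ) (⊤ : ℕ∞) H)
    (XH : ∀ m : M, TangentSpace IM m)
    (hXHsmooth : ContMDiff IM IM.tangent (⊤ : ℕ∞) (fun m => (⟨m, XH m⟩ : TangentBundle IM M)))
    (hXH : ∀ (m : M) (v : TangentSpace IM m), ω m (XH m) v = mfderiv IM 𝓘(ℝ, ℝ) H m v)
    -- the section σ of π
    (σ : N → M) (hσ : ContMDiff IN IM (⊤ : ℕ∞) σ) (hsec : ∀ n, π (σ n) = n) :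
    -- (1) σ co-isotropic: (Im σ_{*,n})^ω ⊆ Im σ_{*,n}
    ((∀ n : N,
        {u : TangentSpace IM (σ n) | ∀ v ∈ Set.range (mfderiv IN IM σ n), ω (σ n) v u = 0} ⊆
          Set.range (mfderiv IN IM σ n)) →
      ((∀ n, mfderiv IN IM σ n (mfderiv IM IN π (σ n) (XH (σ n))) = XH (σ n)) ↔
        (∀ (n : N) (y : TangentSpace IN n),
          mfderiv IN 𝓘(ℝ, ℝ) (H ∘ σ) n y =
            ω (σ n) (mfderiv IN IM σ n (mfderiv IM IN π (σ n) (XH (σ n))))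
              (mfderiv IN IM σ n y)))) ∧
    -- (2) σ Lagrangian: Im σ_{*,n} = (Im σ_{*,n})^ω
    ((∀ n : N,
        Set.range (mfderiv IN IM σ n) =
          {u : TangentSpace IM (σ n) | ∀ v ∈ Set.range (mfderiv IN IM σ n), ω (σ n) v u = 0}) →
      ((∀ n, mfderiv IN IM σ n (mfderiv IM IN π (σ n) (XH (σ n))) = XH (σ n)) ↔
        (∀ n : N, mfderiv IN 𝓘(ℝ, ℝ) (H ∘ σ) n = 0))) :=
  hje_solution_iff_of_coisotropic_or_lagrangian_section_general π hπ ω hωalt H hH XH hXH σ hσ hsec
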